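/- arXiv:2101.04740 — 7 statements merged into one kernel-verified Lean document; each statement's English description precedes it below -/
import Mathlib

section
/- The number of circular binary strings of length n ≥ 1 with no two cyclically consecutive 1s (i.e., b_i * b_{i+1} = 0 for 1 ≤ i ≤ n-1 and also b_n * b_1 = 0) equals the Lucas number L_n. -/
open Finset

/-- A circular binary string `b : Fin n → Bool` avoids two cyclically consecutive 1s. -/
def noConsecCyc (n : ℕ) (b : Fin n → Bool) : Prop :=
  ∀ i j : Fin n, (j : ℕ) = ((i : ℕ) + 1) % n → ¬(b i = true ∧ b j = true)

instance (n : ℕ) : DecidablePred (noConsecCyc n) := fun _ => by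
  unfold noConsecCyc; infer_instance

/-- Lucas numbers: L_0 = 2, L_1 = 1, L_n = L_{n-1} + L_{n-2}. -/
def lucas : ℕ → ℕ
  | 0 => 2
  | 1 => 1
  | n + 2 => lucas (n + 1) + lucas n

namespace CountAux

/-- No two (linearly) consecutive entries of `s` are both `true`. -/
def lin {k : ℕ} (s : Fin (k+1) → Bool) : Prop :=
  ∀ i : Fin k, ¬(s i.castSucc = true ∧ s i.succ = true)

instance {k : ℕ} : DecidablePred (@lin k) := fun _ => by
  unfold lin; infer_instance

/-- Number of strings `t` of length `m` such that `a, t₀, …, t_{m-1}, c`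
has no two consecutive `true`s. -/
def P (m : ℕ) (a c : Bool) : ℕ :=
  ((univ : Finset (Fin m → Bool)).filter
    (fun t => lin (Fin.cons a (Fin.snoc t c)))).card

lemma lin_cons {k : ℕ} (a : Bool) (u : Fin (k+1) → Bool) :
    lin (Fin.cons a u) ↔ ¬(a = true ∧ u 0 = true) ∧ lin u := by
  constructor
  · intro h
    refine ⟨?_, ?_⟩
    · have := h 0
      simpa using this
    · intro i
      have := h i.succ
      rwa [← Fin.succ_castSucc, Fin.cons_succ, Fin.cons_succ] at this
  · rintro ⟨h0, h⟩ i
    induction i using Fin.cases with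
    | zero => simpa using h0
    | succ j =>
      have := h j
      rwa [← Fin.succ_castSucc, Fin.cons_succ, Fin.cons_succ]

lemma snoc_eq_cons {m : ℕ} (t : Fin (m+1) → Bool) (c : Bool) :
    (Fin.snoc t c : Fin (m+2) → Bool) = Fin.cons (t 0) (Fin.snoc (Fin.tail t) c) := by
  conv_lhs => rw [← Fin.cons_self_tail t]
  rw [Fin.cons_snoc_eq_snoc_cons]

lemma snoc_zero' {m : ℕ} (t : Fin (m+1) → Bool) (c : Bool) :
    (Fin.snoc t c : Fin (m+2) → Bool) 0 = t 0 := by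
  have : ((0 : Fin (m+1)).castSucc) = (0 : Fin (m+2)) := rfl
  rw [← this, Fin.snoc_castSucc]

lemma key_iff {m : ℕ} (a c : Bool) (t : Fin (m+1) → Bool) :
    lin (Fin.cons a (Fin.snoc t c)) ↔
      ¬(a = true ∧ t 0 = true) ∧ lin (Fin.cons (t 0) (Fin.snoc (Fin.tail t) c)) := by
  rw [lin_cons, snoc_zero', snoc_eq_cons]

lemma P_succ (m : ℕ) (a c : Bool) :
    P (m+1) a c = (if a = true then 0 else P m true c) + P m false c := by
  classical
  rw [P, ← Finset.card_filter_add_card_filter_not (p := fun t : Fin (m+1) → Bool => t 0 = true)]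
  congr 1
  · -- t 0 = true part
    by_cases ha : a = true
    · simp only [ha, if_true]
      rw [Finset.card_eq_zero, Finset.filter_eq_empty_iff]
      intro t ht
      simp only [mem_coe, mem_filter, mem_univ, true_and] at ht
      rw [key_iff] at ht
      intro h0
      exact ht.1 ⟨rfl, h0⟩
    · simp only [ha, if_false]
      refine Finset.card_nbij' (fun t => Fin.tail t) (fun s => Fin.cons true s) ?_ ?_ ?_ ?_
      · intro t ht
        simp only [mem_coe, mem_filter, mem_univ, true_and] at ht ⊢
        obtain ⟨h1, h2⟩ := ht
        rw [key_iff] at h1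
        rw [h2] at h1
        exact h1.2
      · intro s hs
        simp only [mem_coe, mem_filter, mem_univ, true_and] at hs ⊢
        refine ⟨?_, by simp⟩
        rw [key_iff]
        simp [ha, Fin.tail_cons]
        exact hs
      · intro t ht
        simp only [mem_coe, mem_filter, mem_univ, true_and] at ht
        show Fin.cons true (Fin.tail t) = t
        rw [← ht.2]
        exact Fin.cons_self_tail t
      · intro s hs
        simp [Fin.tail_cons]
  · -- t 0 ≠ true, i.e. = false
    refine Finset.card_nbij' (fun t => Fin.tail t) (fun s => Fin.cons false s) ?_ ?_ ?_ ?_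
    · intro t ht
      simp only [mem_coe, mem_filter, mem_univ, true_and] at ht ⊢
      obtain ⟨h1, h2⟩ := ht
      rw [key_iff] at h1
      rw [Bool.not_eq_true] at h2
      rw [h2] at h1
      exact h1.2
    · intro s hs
      simp only [mem_coe, mem_filter, mem_univ, true_and] at hs ⊢
      refine ⟨?_, by simp⟩
      rw [key_iff]
      simp [Fin.tail_cons]
      exact hs
    · intro t ht
      simp only [mem_coe, mem_filter, mem_univ, true_and] at ht
      rw [Bool.not_eq_true] at ht
      show Fin.cons false (Fin.tail t) = t
      rw [← ht.2]
      exact Fin.cons_self_tail t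
    · intro s hs
      simp [Fin.tail_cons]

lemma P_zero (a c : Bool) : P 0 a c = if a = true ∧ c = true then 0 else 1 := by
  cases a <;> cases c <;> decide


lemma P_succ_false (m : ℕ) (c : Bool) :
    P (m+1) false c = P m true c + P m false c := by
  rw [P_succ]; simp

lemma P_succ_true (m : ℕ) (c : Bool) :
    P (m+1) true c = P m false c := by
  rw [P_succ]; simp

lemma P_vals_ff (m : ℕ) :
    P m false false = Nat.fib (m+2) ∧ P m true false = Nat.fib (m+1) := by
  induction m with
  | zero => exact ⟨by rw [P_zero]; decide, by rw [P_zero]; decide⟩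
  | succ k ih =>
    obtain ⟨h1, h2⟩ := ih
    constructor
    · rw [P_succ_false, h1, h2, Nat.fib_add_two (n := k+1)]
    · rw [P_succ_true, h1]

lemma P_vals_tt (m : ℕ) :
    P m false true = Nat.fib (m+1) ∧ P m true true = Nat.fib m := by
  induction m with
  | zero => exact ⟨by rw [P_zero]; decide, by rw [P_zero]; decide⟩
  | succ k ih =>
    obtain ⟨h1, h2⟩ := ih
    constructor
    · rw [P_succ_false, h1, h2]
      show Nat.fib k + Nat.fib (k+1) = Nat.fib (k+2)
      rw [Nat.fib_add_two]
    · rw [P_succ_true, h1]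

lemma lucas_eq (m : ℕ) : lucas (m+1) = Nat.fib (m+2) + Nat.fib m := by
  induction m using Nat.twoStepInduction with
  | zero => decide
  | one => decide
  | more k ih1 ih2 =>
    show lucas (k+2) + lucas (k+1) = Nat.fib (k+4) + Nat.fib (k+2)
    have e1 : Nat.fib (k+4) = Nat.fib (k+2) + Nat.fib (k+3) := Nat.fib_add_two
    have e2 : Nat.fib (k+3) = Nat.fib (k+1) + Nat.fib (k+2) := Nat.fib_add_two
    have e3 : Nat.fib (k+2) = Nat.fib k + Nat.fib (k+1) := Nat.fib_add_two
    have g1 : lucas (k+1) = Nat.fib (k+2) + Nat.fib k := ih1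
    have g2 : lucas (k+2) = Nat.fib (k+3) + Nat.fib (k+1) := ih2
    omega

lemma snoc_succ {m : ℕ} (b : Fin (m+1) → Bool) (i : Fin (m+1)) :
    (Fin.snoc b (b 0) : Fin (m+2) → Bool) i.succ
      = b ⟨((i:ℕ)+1) % (m+1), Nat.mod_lt _ (Nat.succ_pos m)⟩ := by
  rcases Nat.lt_or_ge ((i:ℕ)+1) (m+1) with h | h
  · have hs : i.succ = (Fin.castSucc ⟨(i:ℕ)+1, h⟩ : Fin (m+2)) := by
      ext; simp
    rw [hs, Fin.snoc_castSucc]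
    congr 1
    ext
    simp [Nat.mod_eq_of_lt h]
  · have him : (i:ℕ) = m := le_antisymm (Nat.lt_succ_iff.mp i.isLt) (by omega)
    have hs : i.succ = Fin.last (m+1) := by
      ext; simp [him]
    rw [hs, Fin.snoc_last]
    congr 1
    ext
    simp only [Fin.val_zero]
    rw [him]
    exact (Nat.mod_self _).symm

lemma cyc_iff {m : ℕ} (b : Fin (m+1) → Bool) :
    noConsecCyc (m+1) b ↔ lin (Fin.snoc b (b 0)) := by
  constructor
  · intro h i
    rw [Fin.snoc_castSucc, snoc_succ]
    exact h i _ rfl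
  · intro h i j hj
    have hj' : j = ⟨((i:ℕ)+1) % (m+1), Nat.mod_lt _ (Nat.succ_pos m)⟩ := Fin.ext hj
    subst hj'
    have hi := h i
    rwa [Fin.snoc_castSucc, snoc_succ] at hi

lemma cyc_iff' {m : ℕ} (b : Fin (m+1) → Bool) :
    noConsecCyc (m+1) b ↔ lin (Fin.cons (b 0) (Fin.snoc (Fin.tail b) (b 0))) := by
  rw [cyc_iff, snoc_eq_cons]

end CountAux

theorem count_noConsecCyc (n : ℕ) (hn : 1 ≤ n) :
    ((univ : Finset (Fin n → Bool)).filter (noConsecCyc n)).card = lucas n := by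
  classical
  obtain ⟨m, rfl⟩ : ∃ m, n = m + 1 := ⟨n - 1, by omega⟩
  have hsplit := Finset.card_filter_add_card_filter_not
    (s := (univ : Finset (Fin (m+1) → Bool)).filter (noConsecCyc (m+1)))
    (p := fun b : Fin (m+1) → Bool => b 0 = true)
  have htt : ((univ.filter (noConsecCyc (m+1))).filter
      (fun b : Fin (m+1) → Bool => b 0 = true)).card = CountAux.P m true true := by
    refine Finset.card_nbij' (fun b => Fin.tail b) (fun s => Fin.cons true s) ?_ ?_ ?_ ?_
    · intro b hb
      simp only [Finset.mem_coe, Finset.mem_filter, Finset.mem_univ, true_and] at hb ⊢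
      obtain ⟨h1, h2⟩ := hb
      rw [CountAux.cyc_iff'] at h1
      rwa [h2] at h1
    · intro s hs
      simp only [Finset.mem_coe, Finset.mem_filter, Finset.mem_univ, true_and] at hs ⊢
      refine ⟨?_, by simp⟩
      rw [CountAux.cyc_iff']
      simpa [Fin.tail_cons] using hs
    · intro b hb
      simp only [Finset.mem_coe, Finset.mem_filter, Finset.mem_univ, true_and] at hb
      show Fin.cons true (Fin.tail b) = b
      rw [← hb.2]
      exact Fin.cons_self_tail b
    · intro s hs
      simp [Fin.tail_cons]
  have hff : ((univ.filter (noConsecCyc (m+1))).filter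
      (fun b : Fin (m+1) → Bool => ¬b 0 = true)).card = CountAux.P m false false := by
    refine Finset.card_nbij' (fun b => Fin.tail b) (fun s => Fin.cons false s) ?_ ?_ ?_ ?_
    · intro b hb
      simp only [Finset.mem_coe, Finset.mem_filter, Finset.mem_univ, true_and] at hb ⊢
      obtain ⟨h1, h2⟩ := hb
      rw [Bool.not_eq_true] at h2
      rw [CountAux.cyc_iff'] at h1
      rwa [h2] at h1
    · intro s hs
      simp only [Finset.mem_coe, Finset.mem_filter, Finset.mem_univ, true_and] at hs ⊢
      refine ⟨?_, by simp⟩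
      rw [CountAux.cyc_iff']
      simpa [Fin.tail_cons] using hs
    · intro b hb
      simp only [Finset.mem_coe, Finset.mem_filter, Finset.mem_univ, true_and] at hb
      rw [Bool.not_eq_true] at hb
      show Fin.cons false (Fin.tail b) = b
      rw [← hb.2]
      exact Fin.cons_self_tail b
    · intro s hs
      simp [Fin.tail_cons]
  rw [htt] at hsplit
  rw [hff] at hsplit
  rw [← hsplit, (CountAux.P_vals_tt m).2, (CountAux.P_vals_ff m).1,
    CountAux.lucas_eq]
  exact Nat.add_comm _ _
end

section
/- For n ≥ 2 and 1 ≤ k ≤ n, the number of binary strings b_1...b_n of length n avoiding consecutive 1s and with b_k = 0 equals f_{k+1} * f_{n-k+2}. -/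
open Finset

def noConsec (n : ℕ) (b : Fin n → Bool) : Prop :=
  ∀ i j : Fin n, (j : ℕ) = (i : ℕ) + 1 → ¬(b i = true ∧ b j = true)

instance (n : ℕ) : DecidablePred (noConsec n) := fun _ => by
  unfold noConsec; infer_instance

lemma noConsec_iff (m : ℕ) (b : Fin m → Bool) :
    noConsec m b ↔ ∀ i : ℕ, ∀ h : i + 1 < m,
      ¬(b ⟨i, Nat.lt_of_succ_lt h⟩ = true ∧ b ⟨i + 1, h⟩ = true) := by
  constructor
  · intro H i h
    exact H ⟨i, Nat.lt_of_succ_lt h⟩ ⟨i + 1, h⟩ rfl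
  · intro H i j hij
    have hj : j = ⟨(i : ℕ) + 1, hij ▸ j.isLt⟩ := Fin.ext hij
    rw [hj]
    exact H (i : ℕ) (hij ▸ j.isLt)

def A (m : ℕ) : ℕ := ((univ : Finset (Fin m → Bool)).filter (noConsec m)).card

lemma A_zero : A 0 = 1 := by decide

lemma A_one : A 1 = 2 := by decide

lemma A_bij1 (m : ℕ) :
    ((univ : Finset (Fin (m + 2) → Bool)).filter
      (fun b => noConsec (m + 2) b ∧ b ⟨m + 1, by omega⟩ = false)).card = A (m + 1) := by
  refine Finset.card_bij'
    (fun b _ => fun x : Fin (m + 1) => b ⟨x, by omega⟩)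
    (fun b _ => fun x : Fin (m + 2) =>
      if h : (x : ℕ) < m + 1 then b ⟨x, h⟩ else false) ?hi ?hj ?li ?ri
  case hi =>
    intro b hb
    simp only [mem_filter, mem_univ, true_and] at hb ⊢
    rw [noConsec_iff] at hb ⊢
    intro i h
    exact hb.1 i (by omega)
  case hj =>
    intro b hb
    simp only [mem_filter, mem_univ, true_and] at hb ⊢
    constructor
    · rw [noConsec_iff] at hb ⊢
      intro i h
      simp only [Fin.val_mk]
      split_ifs with h1 h2 h2
      · exact hb i (by omega)
      · simp
      · omega
      · simp
    · simp
  case li =>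
    intro b hb
    simp only [mem_filter, mem_univ, true_and] at hb
    funext x
    simp only [Fin.val_mk]
    split_ifs with h
    · rfl
    · have hx : x = ⟨m + 1, by omega⟩ := Fin.ext (show (x : ℕ) = m + 1 by omega)
      rw [hx, hb.2]
  case ri =>
    intro b hb
    funext x
    exact dif_pos x.isLt

lemma A_bij2 (m : ℕ) :
    ((univ : Finset (Fin (m + 2) → Bool)).filter
      (fun b => noConsec (m + 2) b ∧ b ⟨m + 1, by omega⟩ = true)).card = A m := by
  refine Finset.card_bij'
    (fun b _ => fun x : Fin m => b ⟨x, by omega⟩)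
    (fun b _ => fun x : Fin (m + 2) =>
      if h : (x : ℕ) < m then b ⟨x, h⟩ else if (x : ℕ) = m + 1 then true else false)
    ?hi ?hj ?li ?ri
  case hi =>
    intro b hb
    simp only [mem_filter, mem_univ, true_and] at hb ⊢
    rw [noConsec_iff] at hb ⊢
    intro i h
    exact hb.1 i (by omega)
  case hj =>
    intro b hb
    simp only [mem_filter, mem_univ, true_and] at hb ⊢
    constructor
    · rw [noConsec_iff] at hb ⊢
      intro i h
      simp only [Fin.val_mk]
      split_ifs <;> first
        | exact hb i (by omega)
        | (exfalso; omega)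
        | simp
    · beta_reduce
      try simp only [Fin.val_mk]
      rw [dif_neg (by omega)]; simp
  case li =>
    intro b hb
    simp only [mem_filter, mem_univ, true_and] at hb
    funext x
    simp only [Fin.val_mk]
    split_ifs with h h2
    · rfl
    · have hx : x = ⟨m + 1, by omega⟩ := Fin.ext (show (x : ℕ) = m + 1 by omega)
      rw [hx, hb.2]
    · have hx : x = ⟨m, by omega⟩ := Fin.ext (show (x : ℕ) = m by omega)
      have hcon := hb.1 ⟨m, by omega⟩ ⟨m + 1, by omega⟩ rfl
      rw [hx]
      cases hbm : b ⟨m, by omega⟩ with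
      | false => rfl
      | true => exact absurd ⟨hbm, hb.2⟩ hcon
  case ri =>
    intro b hb
    funext x
    exact dif_pos x.isLt

lemma A_rec (m : ℕ) : A (m + 2) = A (m + 1) + A m := by
  rw [← A_bij1 m, ← A_bij2 m]
  rw [A]
  rw [← Finset.card_filter_add_card_filter_not
    (p := fun b : Fin (m + 2) → Bool => b ⟨m + 1, by omega⟩ = false)]
  rw [Finset.filter_filter, Finset.filter_filter]
  congr 1
  congr 1
  ext b
  simp

lemma A_fib : ∀ m, A m = Nat.fib (m + 2)
  | 0 => by rw [A_zero]; rfl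
  | 1 => by rw [A_one]; rfl
  | (m + 2) => by
      rw [A_rec, A_fib (m + 1), A_fib m]
      rw [show m + 1 + 2 = m + 3 from rfl, show m + 2 + 2 = m + 4 from rfl,
        show Nat.fib (m + 4) = Nat.fib (m + 2) + Nat.fib (m + 3) from Nat.fib_add_two]
      omega

lemma prod_lemma (a c : ℕ) :
    ((univ : Finset (Fin (a + 1 + c) → Bool)).filter
        (fun b => noConsec (a + 1 + c) b ∧ b ⟨a, by omega⟩ = false)).card = A a * A c := by
  rw [A, A, ← Finset.card_product]
  refine Finset.card_bij'
    (fun b _ => (fun x : Fin a => b ⟨x, by omega⟩, fun x : Fin c => b ⟨a + 1 + x, by omega⟩))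
    (fun p _ => fun x : Fin (a + 1 + c) =>
      if h : (x : ℕ) < a then p.1 ⟨x, h⟩
      else if h2 : a + 1 ≤ (x : ℕ) then p.2 ⟨(x : ℕ) - (a + 1), by omega⟩ else false)
    ?hi ?hj ?li ?ri
  case hi =>
    intro b hb
    simp only [mem_filter, mem_univ, true_and, mem_product] at hb ⊢
    rw [noConsec_iff] at hb
    constructor
    · rw [noConsec_iff]
      intro i h
      exact hb.1 i (by omega)
    · rw [noConsec_iff]
      intro i h
      exact hb.1 (a + 1 + i) (by omega)
  case hj =>
    intro p hp
    simp only [mem_filter, mem_univ, true_and, mem_product] at hp ⊢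
    rw [noConsec_iff] at hp ⊢
    obtain ⟨hp1, hp2⟩ := hp
    rw [noConsec_iff] at hp2
    constructor
    · intro i h
      simp only [Fin.val_mk]
      split_ifs <;> first
        | exact hp1 i (by omega)
        | (exfalso; omega)
        | (intro hh
           refine hp2 (i - (a + 1)) (by omega) ⟨hh.1, ?_⟩
           rw [show (⟨i - (a + 1) + 1, by omega⟩ : Fin c)
               = ⟨i + 1 - (a + 1), by omega⟩ from
               Fin.ext (show i - (a+1) + 1 = i + 1 - (a+1) by omega)]
           exact hh.2)
        | simp
    · beta_reduce
      try simp only [Fin.val_mk]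
      rw [dif_neg (by omega), dif_neg (by omega)]
  case li =>
    intro b hb
    simp only [mem_filter, mem_univ, true_and] at hb
    funext x
    simp only [Fin.val_mk]
    split_ifs with h h2
    · rfl
    · exact congrArg b (Fin.ext (show a + 1 + ((x : ℕ) - (a + 1)) = (x : ℕ) by omega))
    · have hx : x = ⟨a, by omega⟩ := Fin.ext (show (x : ℕ) = a by omega)
      rw [hx, hb.2]
  case ri =>
    intro p hp
    refine Prod.ext ?_ ?_
    · funext x
      exact dif_pos x.isLt
    · funext x
      simp only [Fin.val_mk]
      rw [dif_neg (by omega), dif_pos (by omega)]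
      exact congrArg p.2 (Fin.ext (show a + 1 + (x : ℕ) - (a + 1) = (x : ℕ) by omega))

theorem count_noConsec_zero_at (n k : ℕ) (hn : 2 ≤ n) (hk1 : 1 ≤ k) (hk2 : k ≤ n) :
    ((univ : Finset (Fin n → Bool)).filter
        (fun b => noConsec n b ∧ b ⟨k - 1, by omega⟩ = false)).card =
      Nat.fib (k + 1) * Nat.fib (n - k + 2) := by
  obtain ⟨c, rfl⟩ : ∃ c, n = (k - 1) + 1 + c := ⟨n - k, by omega⟩
  refine (prod_lemma (k - 1) c).trans ?_
  rw [A_fib, A_fib, show k - 1 + 2 = k + 1 from by omega,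
    show k - 1 + 1 + c - k + 2 = c + 2 from by omega]
end

section
/- For n ≥ 2, the sum over k from 1 to n of f_k * f_{n-k+1} * (f_{k+1} * f_{n-k+2} - f_k * f_{n-k+1}) equals (1/25) * ((3n-2) * f_{2n+2} + n * f_{2n+1} + (3n+2) * (-1)^n). -/
open Finset

private def Fq (n : ℕ) : ℚ := Nat.fib n

private lemma Fq_add_two (n : ℕ) : Fq (n + 2) = Fq (n + 1) + Fq n := by
  unfold Fq; rw [Nat.fib_add_two]; push_cast; ring

private lemma Fq_zero : Fq 0 = 0 := by simp [Fq]
private lemma Fq_one : Fq 1 = 1 := by simp [Fq]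

private lemma cassiniq (n : ℕ) :
    Fq (n + 1) ^ 2 - Fq (n + 1) * Fq n - Fq n ^ 2 = (-1 : ℚ) ^ n := by
  induction n with
  | zero => simp [Fq]
  | succ n ih =>
      rw [Fq_add_two]
      linear_combination -ih

private lemma Fq_two_mul_add_one (n : ℕ) : Fq (2 * n + 1) = Fq (n + 1) ^ 2 + Fq n ^ 2 := by
  unfold Fq
  have := Nat.fib_two_mul_add_one n
  rw [this]; push_cast; ring

private lemma Fq_two_mul_add_two (n : ℕ) :
    Fq (2 * n + 2) = Fq (n + 1) ^ 2 + 2 * Fq n * Fq (n + 1) := by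
  have h := Nat.fib_add (n + 1) n
  have h2 : n + 1 + n + 1 = 2 * n + 2 := by ring
  rw [h2] at h
  have : Fq (2 * n + 2) = Fq (n + 1) * Fq n + Fq (n + 2) * Fq (n + 1) := by
    unfold Fq; rw [h]; push_cast; ring
  rw [this, Fq_add_two]; ring

private lemma sums_closed (n : ℕ) :
    (∑ k ∈ Icc 1 n, Fq k * Fq (n - k + 1)
      = ((n : ℚ) * Fq (n + 1) + 2 * n * Fq n + 2 * Fq n) / 5) ∧
    (∑ k ∈ Icc 1 n, Fq k * Fq (n - k)
      = (2 * (n : ℚ) * Fq (n + 1) - n * Fq n - Fq n) / 5) ∧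
    (∑ k ∈ Icc 1 n, (Fq k * Fq (n - k + 1)) ^ 2
      = (-(n : ℚ) * Fq (n + 1) ^ 2 + 6 * n * Fq n * Fq (n + 1) + 6 * n * Fq n ^ 2
          + 8 * Fq n * Fq (n + 1) + 6 * Fq n ^ 2) / 25) ∧
    (∑ k ∈ Icc 1 n, Fq k ^ 2 * Fq (n - k + 1) * Fq (n - k)
      = (3 * (n : ℚ) * Fq (n + 1) ^ 2 + 2 * n * Fq n * Fq (n + 1) - 3 * n * Fq n ^ 2
          + Fq n * Fq (n + 1) - 3 * Fq n ^ 2) / 25) ∧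
    (∑ k ∈ Icc 1 n, (Fq k * Fq (n - k)) ^ 2
      = (6 * (n : ℚ) * Fq (n + 1) ^ 2 - 6 * n * Fq n * Fq (n + 1) - n * Fq n ^ 2
          + 2 * Fq n * Fq (n + 1) - Fq n ^ 2) / 25) := by
  induction n with
  | zero => simp [Fq]
  | succ n ih =>
      obtain ⟨hC, hC2, hD, hE, hF⟩ := ih
      have hsub : ∀ k ∈ Icc 1 n, n + 1 - k = (n - k) + 1 := by
        intro k hk
        exact Nat.succ_sub (mem_Icc.mp hk).2
      have htop : ∀ g : ℕ → ℚ, ∑ k ∈ Icc 1 (n + 1), g k = (∑ k ∈ Icc 1 n, g k) + g (n + 1) := by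
        intro g
        exact Finset.sum_Icc_succ_top (Nat.le_add_left 1 n) g
      refine ⟨?_, ?_, ?_, ?_, ?_⟩
      · rw [htop]
        have e : ∀ k ∈ Icc 1 n, Fq k * Fq (n + 1 - k + 1)
            = Fq k * Fq (n - k + 1) + Fq k * Fq (n - k) := by
          intro k hk
          rw [hsub k hk, Fq_add_two]; ring
        rw [Finset.sum_congr rfl e, Finset.sum_add_distrib, hC, hC2]
        simp only [Nat.sub_self, zero_add, Nat.add_sub_cancel, Fq_one, Fq_zero, mul_one, one_mul, one_pow, mul_zero, zero_mul]
        rw [Fq_add_two]; push_cast; ring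
      · rw [htop]
        have e : ∀ k ∈ Icc 1 n, Fq k * Fq (n + 1 - k) = Fq k * Fq (n - k + 1) := by
          intro k hk
          rw [hsub k hk]
        rw [Finset.sum_congr rfl e, hC]
        simp only [Nat.sub_self, zero_add, Nat.add_sub_cancel, Fq_one, Fq_zero, mul_one, one_mul, one_pow, mul_zero, zero_mul]
        rw [Fq_add_two]; push_cast; ring
      · rw [htop]
        have e : ∀ k ∈ Icc 1 n, (Fq k * Fq (n + 1 - k + 1)) ^ 2
            = (Fq k * Fq (n - k + 1)) ^ 2 + 2 * (Fq k ^ 2 * Fq (n - k + 1) * Fq (n - k))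
              + (Fq k * Fq (n - k)) ^ 2 := by
          intro k hk
          rw [hsub k hk, Fq_add_two]; ring
        rw [Finset.sum_congr rfl e, Finset.sum_add_distrib, Finset.sum_add_distrib,
          ← Finset.mul_sum, hD, hE, hF]
        simp only [Nat.sub_self, zero_add, Nat.add_sub_cancel, Fq_one, Fq_zero, mul_one, one_mul, one_pow, mul_zero, zero_mul]
        rw [Fq_add_two]; push_cast; ring
      · rw [htop]
        have e : ∀ k ∈ Icc 1 n, Fq k ^ 2 * Fq (n + 1 - k + 1) * Fq (n + 1 - k)
            = (Fq k * Fq (n - k + 1)) ^ 2 + Fq k ^ 2 * Fq (n - k + 1) * Fq (n - k) := by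
          intro k hk
          rw [hsub k hk, Fq_add_two]; ring
        rw [Finset.sum_congr rfl e, Finset.sum_add_distrib, hD, hE]
        simp only [Nat.sub_self, zero_add, Nat.add_sub_cancel, Fq_one, Fq_zero, mul_one, one_mul, one_pow, mul_zero, zero_mul]
        rw [Fq_add_two]; push_cast; ring
      · rw [htop]
        have e : ∀ k ∈ Icc 1 n, (Fq k * Fq (n + 1 - k)) ^ 2
            = (Fq k * Fq (n - k + 1)) ^ 2 := by
          intro k hk
          rw [hsub k hk]
        rw [Finset.sum_congr rfl e, hD]
        simp only [Nat.sub_self, zero_add, Nat.add_sub_cancel, Fq_one, Fq_zero, mul_one, one_mul, one_pow, mul_zero, zero_mul]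
        rw [Fq_add_two]; push_cast; ring

theorem mostar_sum_closed_form (n : ℕ) (hn : 2 ≤ n) :
    ∑ k ∈ Icc 1 n, (Nat.fib k * Nat.fib (n - k + 1) : ℚ) *
        ((Nat.fib (k + 1) : ℚ) * Nat.fib (n - k + 2) -
          (Nat.fib k : ℚ) * Nat.fib (n - k + 1)) =
      (1 / 25) * ((3 * (n : ℚ) - 2) * Nat.fib (2 * n + 2) + (n : ℚ) * Nat.fib (2 * n + 1) +
        (3 * (n : ℚ) + 2) * (-1 : ℚ) ^ n) := by
  obtain ⟨hC, -, hD, -, -⟩ := sums_closed n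
  have key : ∀ k ∈ Icc 1 n,
      (Nat.fib k * Nat.fib (n - k + 1) : ℚ) *
        ((Nat.fib (k + 1) : ℚ) * Nat.fib (n - k + 2) -
          (Nat.fib k : ℚ) * Nat.fib (n - k + 1))
      = Fq (n + 2) * (Fq k * Fq (n - k + 1)) - 2 * (Fq k * Fq (n - k + 1)) ^ 2 := by
    intro k hk
    obtain ⟨hk1, hk2⟩ := mem_Icc.mp hk
    have hidx : k + (n - k + 1) + 1 = n + 2 := by omega
    have h := Nat.fib_add k (n - k + 1)
    rw [hidx] at h
    have h' : Fq (n + 2) = Fq k * Fq (n - k + 1) + Fq (k + 1) * Fq (n - k + 2) := by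
      unfold Fq; rw [h]; push_cast; ring
    show Fq k * Fq (n - k + 1) * (Fq (k + 1) * Fq (n - k + 2) - Fq k * Fq (n - k + 1)) = _
    rw [show Fq (k + 1) * Fq (n - k + 2) = Fq (n + 2) - Fq k * Fq (n - k + 1) by
      linarith [h']]
    ring
  rw [Finset.sum_congr rfl key, Finset.sum_sub_distrib, ← Finset.mul_sum,
    ← Finset.mul_sum, hC, hD]
  show _ = (1 / 25) * ((3 * (n : ℚ) - 2) * Fq (2 * n + 2) + (n : ℚ) * Fq (2 * n + 1) +
    (3 * (n : ℚ) + 2) * (-1 : ℚ) ^ n)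
  rw [Fq_two_mul_add_one, Fq_two_mul_add_two, Fq_add_two]
  linear_combination ((3 * (n : ℚ) + 2) / 25) * cassiniq n
end

section
/- The number of edges of the Lucas cube Λ_n equals n * f_{n-1} for n ≥ 1. -/
open Finset

def LucasVertex (n : ℕ) := {b : Fin n → Bool // noConsecCyc n b}

instance (n : ℕ) : Fintype (LucasVertex n) := Subtype.fintype _
instance (n : ℕ) : DecidableEq (LucasVertex n) := Subtype.instDecidableEq



def LinP (m : ℕ) (v : Fin m → Bool) : Prop :=
  ∀ a : ℕ, (h : a + 1 < m) → ¬(v ⟨a, Nat.lt_of_succ_lt h⟩ = true ∧ v ⟨a+1, h⟩ = true)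

instance (m : ℕ) : DecidablePred (LinP m) := fun v =>
  decidable_of_iff
    (∀ i j : Fin m, (j : ℕ) = (i : ℕ) + 1 → ¬(v i = true ∧ v j = true)) <| by
  constructor
  · intro h a ha
    exact h ⟨a, Nat.lt_of_succ_lt ha⟩ ⟨a+1, ha⟩ rfl
  · intro h i j hj
    have hj' : (i : ℕ) + 1 < m := hj ▸ j.isLt
    have h1 : i = ⟨(i : ℕ), Nat.lt_of_succ_lt hj'⟩ := by apply Fin.ext; rfl
    have h2 : j = ⟨(i : ℕ) + 1, hj'⟩ := by apply Fin.ext; exact hj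
    rw [h1, h2]
    exact h (i : ℕ) hj'

lemma cons_mk_succ {k : ℕ} (a : Bool) (w : Fin k → Bool) (j : ℕ) (h : j+1 < k+1) :
    (Fin.cons a w : Fin (k+1) → Bool) ⟨j+1, h⟩ = w ⟨j, Nat.lt_of_succ_lt_succ h⟩ := by
  have e : (⟨j+1, h⟩ : Fin (k+1)) = Fin.succ ⟨j, Nat.lt_of_succ_lt_succ h⟩ := rfl
  rw [e, Fin.cons_succ]

lemma lin_cons_false {k : ℕ} (w : Fin k → Bool) :
    LinP (k+1) (Fin.cons false w) ↔ LinP k w := by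
  constructor
  · intro h a ha
    have := h (a+1) (by omega)
    rwa [cons_mk_succ, cons_mk_succ] at this
  · intro h a ha
    match a with
    | 0 =>
      rw [show (⟨0, Nat.lt_of_succ_lt ha⟩ : Fin (k+1)) = 0 from rfl, Fin.cons_zero]
      simp
    | a+1 =>
      rw [cons_mk_succ, cons_mk_succ]
      exact h a (by omega)

lemma lin_cons_true {k : ℕ} (w : Fin (k+1) → Bool) :
    LinP (k+2) (Fin.cons true w) ↔ (w 0 = false ∧ LinP (k+1) w) := by
  constructor
  · intro h
    constructor
    · have := h 0 (by omega)
      rw [show (⟨0, by omega⟩ : Fin (k+2)) = 0 from rfl, Fin.cons_zero,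
        cons_mk_succ] at this
      simpa using this
    · intro a ha
      have := h (a+1) (by omega)
      rwa [cons_mk_succ, cons_mk_succ] at this
  · rintro ⟨h0, h⟩ a ha
    match a with
    | 0 =>
      rw [show (⟨0, Nat.lt_of_succ_lt ha⟩ : Fin (k+2)) = 0 from rfl, Fin.cons_zero,
        cons_mk_succ]
      simp [show (⟨0, Nat.lt_of_succ_lt_succ ha⟩ : Fin (k+1)) = 0 from rfl, h0]
    | a+1 =>
      rw [cons_mk_succ, cons_mk_succ]
      exact h a (by omega)

lemma linCount : ∀ m : ℕ,
    #((univ : Finset (Fin m → Bool)).filter (fun v => LinP m v)) = Nat.fib (m+2) := by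
  intro m
  induction m using Nat.strong_induction_on with
  | _ m ih =>
    match m with
    | 0 => decide
    | 1 => decide
    | (k+2) =>
      have key : ((univ : Finset (Fin (k+2) → Bool)).filter (fun v => LinP (k+2) v))
          = ((univ : Finset (Fin (k+1) → Bool)).filter (fun v => LinP (k+1) v)).image
              (fun w : Fin (k+1) → Bool => (Fin.cons false w : Fin (k+2) → Bool))
            ∪ ((univ : Finset (Fin k → Bool)).filter (fun v => LinP k v)).image
              (fun w : Fin k → Bool =>
                (Fin.cons true (Fin.cons false w) : Fin (k+2) → Bool)) := by
        ext v
        simp only [mem_filter, mem_union, mem_image, mem_univ, true_and]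
        constructor
        · intro hv
          cases hv0 : v 0 with
          | false =>
            left
            refine ⟨Fin.tail v, ?_, ?_⟩
            · rw [← lin_cons_false]
              rwa [show (Fin.cons false (Fin.tail v) : Fin (k+2) → Bool) = v by
                rw [← hv0, Fin.cons_self_tail]]
            · rw [← hv0, Fin.cons_self_tail]
          | true =>
            right
            have hv' : Fin.tail v 0 = false ∧ LinP (k+1) (Fin.tail v) := by
              rw [← lin_cons_true]
              rwa [show (Fin.cons true (Fin.tail v) : Fin (k+2) → Bool) = v by
                rw [← hv0, Fin.cons_self_tail]]
            have e1 : (Fin.cons false (Fin.tail (Fin.tail v)) : Fin (k+1) → Bool)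
                = Fin.tail v := by rw [← hv'.1, Fin.cons_self_tail]
            refine ⟨Fin.tail (Fin.tail v), ?_, ?_⟩
            · rw [← lin_cons_false, e1]; exact hv'.2
            · rw [e1, ← hv0, Fin.cons_self_tail]
        · rintro (⟨w, hw, rfl⟩ | ⟨w, hw, rfl⟩)
          · rwa [lin_cons_false]
          · rw [lin_cons_true]
            exact ⟨Fin.cons_zero _ _, (lin_cons_false w).2 hw⟩
      have hdisj : Disjoint
          (((univ : Finset (Fin (k+1) → Bool)).filter (fun v => LinP (k+1) v)).image
            (fun w : Fin (k+1) → Bool => (Fin.cons false w : Fin (k+2) → Bool)))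
          (((univ : Finset (Fin k → Bool)).filter (fun v => LinP k v)).image
            (fun w : Fin k → Bool =>
              (Fin.cons true (Fin.cons false w) : Fin (k+2) → Bool))) := by
        rw [disjoint_left]
        intro v hv1 hv2
        simp only [mem_image, mem_filter, mem_univ, true_and] at hv1 hv2
        obtain ⟨w, _, rfl⟩ := hv1
        obtain ⟨w', _, hw'⟩ := hv2
        have : (true : Bool) = false := by
          conv_lhs => rw [← Fin.cons_zero (α := fun _ : Fin (k+2) => Bool) true
            (Fin.cons false w'), hw', Fin.cons_zero]
        simp at this
      have hinj2 : Function.Injective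
          (fun w : Fin k → Bool => (Fin.cons true (Fin.cons false w) : Fin (k+2) → Bool)) := by
        intro w1 w2 h
        have := Fin.cons_right_injective (α := fun _ : Fin (k+2) => Bool) true h
        exact Fin.cons_right_injective _ this
      rw [key, card_union_of_disjoint hdisj,
        card_image_of_injective _ (Fin.cons_right_injective (α := fun _ : Fin (k+2) => Bool) false),
        card_image_of_injective _ hinj2, ih (k+1) (by omega), ih k (by omega),
        show k+2+2 = (k+2)+2 from rfl, Nat.fib_add_two (n := k+2),
        show k+1+2 = (k+2)+1 by omega]
      ring
lemma val_succ_fin {m : ℕ} (i : Fin (m+1)) :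
    ((i + 1 : Fin (m+1)) : ℕ) = ((i : ℕ) + 1) % (m+1) := by
  rcases eq_or_ne i (Fin.last m) with h | h
  · subst h
    rw [Fin.last_add_one]
    simp [Fin.val_last, Nat.mod_self]
  · have hlt : (i : ℕ) < m := by
      have := i.isLt
      rcases Nat.lt_or_ge (i : ℕ) m with h' | h'
      · exact h'
      · exact absurd (Fin.ext (by omega : (i : ℕ) = m)) h
    rw [Fin.val_add_one_of_lt (by rwa [Fin.lt_def, Fin.val_last])]
    rw [Nat.mod_eq_of_lt (by omega)]

lemma noConsecCyc_iff {m : ℕ} (b : Fin (m+1) → Bool) :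
    noConsecCyc (m+1) b ↔ ∀ i : Fin (m+1), ¬(b i = true ∧ b (i+1) = true) := by
  constructor
  · intro h i
    exact h i (i+1) (val_succ_fin i)
  · intro h i j hj
    have : j = i + 1 := Fin.ext (by rw [val_succ_fin]; exact hj)
    rw [this]
    exact h i
lemma flipOK {n : ℕ} {b : Fin n → Bool} (hb : noConsecCyc n b) (i : Fin n) :
    noConsecCyc n (Function.update b i false) := by
  have key : ∀ x, Function.update b i false x = true → b x = true := by
    intro x hx
    rw [Function.update_apply] at hx
    by_cases hxi : x = i
    · simp [hxi] at hx
    · simpa [hxi] using hx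
  intro i' j' hj' h
  exact hb i' j' hj' ⟨key _ h.1, key _ h.2⟩

def flipV {n : ℕ} (b : LucasVertex n) (i : Fin n) : LucasVertex n :=
  ⟨Function.update b.1 i false, flipOK b.2 i⟩

lemma filt_update {n : ℕ} (x : Fin n → Bool) (i : Fin n) (h : x i = true) :
    ((univ : Finset (Fin n)).filter (fun j => x j ≠ Function.update x i false j)) = {i} := by
  ext j
  simp only [mem_filter, mem_univ, true_and, mem_singleton, Function.update_apply]
  by_cases hj : j = i
  · simp [hj, h]
  · simp [hj]

lemma filt_update' {n : ℕ} (x : Fin n → Bool) (i : Fin n) (h : x i = true) :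
    ((univ : Finset (Fin n)).filter (fun j => Function.update x i false j ≠ x j)) = {i} := by
  rw [← filt_update x i h]
  ext j
  simp only [mem_filter, mem_univ, true_and]
  exact ⟨Ne.symm, Ne.symm⟩

lemma ham_update {n : ℕ} (x : Fin n → Bool) (i : Fin n) (h : x i = true) :
    hammingDist x (Function.update x i false) = 1 := by
  unfold hammingDist
  rw [filt_update x i h, card_singleton]

lemma ham_update' {n : ℕ} (x : Fin n → Bool) (i : Fin n) (h : x i = true) :
    hammingDist (Function.update x i false) x = 1 := by
  rw [hammingDist_comm]
  exact ham_update x i h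

def diffIdx {m : ℕ} (x y : Fin (m+1) → Bool) : Fin (m+1) :=
  if h : ((univ : Finset (Fin (m+1))).filter (fun j => x j ≠ y j)).Nonempty
  then ((univ : Finset (Fin (m+1))).filter (fun j => x j ≠ y j)).min' h else 0

lemma diffIdx_eq {m : ℕ} {x y : Fin (m+1) → Bool} {i : Fin (m+1)}
    (h : ((univ : Finset (Fin (m+1))).filter (fun j => x j ≠ y j)) = {i}) :
    diffIdx x y = i := by
  unfold diffIdx
  rw [dif_pos (h ▸ ⟨i, mem_singleton_self i⟩)]
  apply le_antisymm
  · exact Finset.min'_le _ i (by rw [h]; exact mem_singleton_self i)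
  · apply Finset.le_min'
    intro j hj
    rw [h, mem_singleton] at hj
    exact hj ▸ le_refl _

lemma diff_spec {m : ℕ} {x y : Fin (m+1) → Bool} (h : hammingDist x y = 1) :
    ((univ : Finset (Fin (m+1))).filter (fun j => x j ≠ y j)) = {diffIdx x y} := by
  unfold hammingDist at h
  obtain ⟨a, ha⟩ := Finset.card_eq_one.1 h
  rw [ha, diffIdx_eq ha]

lemma bool_ne_true {a b : Bool} (h : a ≠ b) (ha : a = true) : b = false := by
  subst ha; cases b
  · rfl
  · exact absurd rfl h

lemma bool_ne_false {a b : Bool} (h : a ≠ b) (ha : a = false) : b = true := by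
  subst ha; cases b
  · exact absurd rfl h
  · rfl
def gmap (k : ℕ) (w : Fin k → Bool) : Fin (k+3) → Bool := fun j =>
  if h : 2 ≤ (j : ℕ) ∧ (j : ℕ) ≤ k+1 then w ⟨(j : ℕ) - 2, by omega⟩
  else decide ((j : ℕ) = 0)

lemma gmap_mid {k : ℕ} (w : Fin k → Bool) (j : Fin (k+3)) (h2 : 2 ≤ (j : ℕ))
    (hk : (j : ℕ) ≤ k+1) : gmap k w j = w ⟨(j : ℕ) - 2, by omega⟩ :=
  dif_pos ⟨h2, hk⟩

lemma gmap_zero {k : ℕ} (w : Fin k → Bool) (j : Fin (k+3)) (h : (j : ℕ) = 0) :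
    gmap k w j = true := by
  rw [gmap, dif_neg (by omega)]
  simp [h]

lemma gmap_off {k : ℕ} (w : Fin k → Bool) (j : Fin (k+3)) (h : (j : ℕ) = 1 ∨ (j : ℕ) = k+2) :
    gmap k w j = false := by
  rw [gmap, dif_neg (by omega)]
  apply decide_eq_false; omega

lemma countA (m : ℕ) :
    #((univ : Finset (Fin (m+1) → Bool)).filter
      (fun b => noConsecCyc (m+1) b ∧ b 0 = true)) = Nat.fib m := by
  match m with
  | 0 => decide
  | 1 => decide
  | (k+2) =>
    rw [show Nat.fib (k+2) = Nat.fib (k+2) from rfl, ← linCount k]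
    apply Finset.card_nbij'
      (i := fun b => fun i : Fin k => b ⟨(i : ℕ) + 2, by omega⟩)
      (j := fun w => gmap k w)
    · intro b hb
      simp only [mem_coe, mem_filter, mem_univ, true_and] at hb ⊢
      obtain ⟨hc, h0⟩ := hb
      rw [noConsecCyc_iff] at hc
      intro a ha
      have := hc ⟨a + 2, by omega⟩
      have e : (⟨a+2, by omega⟩ + 1 : Fin (k+2+1)) = ⟨a+3, by omega⟩ := by
        apply Fin.ext
        rw [Fin.val_add_one_of_lt (by rw [Fin.lt_def, Fin.val_last]; simp; omega)]
      rw [e] at this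
      exact this
    · intro w hw
      simp only [mem_coe, mem_filter, mem_univ, true_and] at hw ⊢
      constructor
      · rw [noConsecCyc_iff]
        intro j
        rcases eq_or_ne j (Fin.last (k+2)) with hj | hj
        · rw [gmap_off w j (by rw [hj, Fin.val_last]; omega)]
          simp
        · have hlt : (j : ℕ) < k + 2 := by
            have := j.isLt
            rcases Nat.lt_or_ge (j : ℕ) (k+2) with h' | h'
            · exact h'
            · exact absurd (Fin.ext (a := j) (b := Fin.last (k+2))
                (by rw [Fin.val_last]; omega)) hj
          have hsucc : ((j + 1 : Fin (k+3)) : ℕ) = (j : ℕ) + 1 :=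
            Fin.val_add_one_of_lt (n := k+2) (by rwa [Fin.lt_def, Fin.val_last])
          rcases Nat.lt_or_ge (j : ℕ) 2 with h2 | h2
          · rcases Nat.lt_or_ge (j : ℕ) 1 with h1 | h1
            · -- j = 0, j+1 has val 1
              rw [gmap_off w (j+1) (by rw [hsucc]; omega)]
              simp
            · rw [gmap_off w j (by omega)]
              simp
          · rcases Nat.lt_or_ge (j : ℕ) (k+1) with hk1 | hk1
            · -- middle: j in [2, k], j+1 in [3, k+1]
              rw [gmap_mid w j h2 (by omega),
                gmap_mid w (j+1) (by rw [hsucc]; omega) (by rw [hsucc]; omega)]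
              have hthis := hw ((j : ℕ) - 2) (by omega)
              have e2 : (⟨((j+1 : Fin (k+3)) : ℕ) - 2, by rw [hsucc]; omega⟩ : Fin k)
                  = ⟨(j:ℕ) - 2 + 1, by omega⟩ := by
                apply Fin.ext; simp only [hsucc]; omega
              rw [e2]
              exact hthis
            · -- j = k+1, j+1 = k+2
              rw [gmap_off w (j+1) (by rw [hsucc]; omega)]
              simp
      · exact gmap_zero w 0 rfl
    · intro b hb
      simp only [mem_coe, mem_filter, mem_univ, true_and] at hb
      obtain ⟨hc, h0⟩ := hb
      rw [noConsecCyc_iff] at hc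
      funext j
      beta_reduce
      rcases Nat.lt_or_ge (j : ℕ) 1 with h1 | h1
      · rw [gmap_zero _ j (by omega)]
        rw [show j = 0 from Fin.ext (by rw [Fin.val_zero]; omega), h0]
      · rcases Nat.lt_or_ge (j : ℕ) 2 with h2 | h2
        · -- j val 1 : b j = false
          rw [gmap_off _ j (by omega)]
          have := hc 0
          rw [h0] at this
          have e : (0 + 1 : Fin (k+2+1)) = j := by
            apply Fin.ext
            rw [Fin.val_add_one_of_lt
              (by rw [Fin.lt_def, Fin.val_last, Fin.val_zero]; omega)]
            rw [Fin.val_zero]; omega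
          rw [e] at this
          simp only [true_and] at this
          simp only [Bool.not_eq_true] at this
          exact this.symm
        · rcases Nat.lt_or_ge (j : ℕ) (k+2) with hk1 | hk1
          · rw [gmap_mid _ j h2 (by omega)]
            congr 1
            apply Fin.ext
            simp; omega
          · -- j = last : b j = false
            rw [gmap_off _ j (by have := j.isLt; omega)]
            have := hc (Fin.last (k+2))
            rw [Fin.last_add_one, h0] at this
            simp only [and_true] at this
            simp only [Bool.not_eq_true] at this
            rw [show j = Fin.last (k+2) from Fin.ext (by rw [Fin.val_last]; have := j.isLt; omega)]
            exact this.symm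
    · intro w hw
      funext i
      beta_reduce
      rw [gmap_mid _ _ (by simp) (by simp)]
      congr 1
lemma countRot (m : ℕ) (t : Fin (m+1)) :
    #((univ : Finset (Fin (m+1) → Bool)).filter
      (fun b => noConsecCyc (m+1) b ∧ b t = true))
    = #((univ : Finset (Fin (m+1) → Bool)).filter
      (fun b => noConsecCyc (m+1) b ∧ b 0 = true)) := by
  apply Finset.card_nbij' (i := fun b => fun j => b (j + t)) (j := fun b => fun j => b (j - t))
  · intro b hb
    simp only [mem_coe, mem_filter, mem_univ, true_and] at hb ⊢
    obtain ⟨hc, ht⟩ := hb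
    rw [noConsecCyc_iff] at hc ⊢
    refine ⟨fun j => ?_, by rwa [zero_add]⟩
    have := hc (j + t)
    rwa [show j + t + 1 = j + 1 + t from add_right_comm j t 1] at this
  · intro b hb
    simp only [mem_coe, mem_filter, mem_univ, true_and] at hb ⊢
    obtain ⟨hc, h0⟩ := hb
    rw [noConsecCyc_iff] at hc ⊢
    refine ⟨fun j => ?_, by rwa [sub_self]⟩
    have := hc (j - t)
    rwa [show j - t + 1 = j + 1 - t from sub_add_eq_add_sub j t 1] at this
  · intro b _; funext j; show b (j - t + t) = b j; rw [sub_add_cancel]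
  · intro b _; funext j; show b (j + t - t) = b j; rw [add_sub_cancel_right]
/-- Λ_n has n·f_{n-1} edges; ordered adjacent pairs count each edge twice. -/
theorem lucas_cube_edge_count (n : ℕ) (hn : 1 ≤ n) :
    ((univ : Finset (LucasVertex n × LucasVertex n)).filter
        (fun p => hammingDist p.1.1 p.2.1 = 1)).card = 2 * (n * Nat.fib (n - 1)) := by
  obtain ⟨m, rfl⟩ : ∃ m, n = m + 1 := ⟨n - 1, by omega⟩
  have hS : #((univ : Finset (LucasVertex (m+1) × Fin (m+1))).filter
      (fun q => q.1.1 q.2 = true)) = (m+1) * Nat.fib m := by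
    rw [Finset.card_filter, Fintype.sum_prod_type, Finset.sum_comm]
    have hterm : ∀ i : Fin (m+1),
        (∑ b : LucasVertex (m+1), if b.1 i = true then 1 else 0) = Nat.fib m := by
      intro i
      rw [← Finset.card_filter]
      have hcard : #((univ : Finset (LucasVertex (m+1))).filter (fun b => b.1 i = true))
          = #((univ : Finset (Fin (m+1) → Bool)).filter
              (fun b => noConsecCyc (m+1) b ∧ b i = true)) := by
        apply Finset.card_bij (fun b _ => b.1)
        · intro b hb
          simp only [mem_filter, mem_univ, true_and] at hb ⊢
          exact ⟨b.2, hb⟩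
        · intro b1 _ b2 _ h
          exact Subtype.ext h
        · intro b hb
          simp only [mem_filter, mem_univ, true_and] at hb
          exact ⟨⟨b, hb.1⟩, mem_filter.2 ⟨mem_univ _, hb.2⟩, rfl⟩
      rw [hcard, countRot m i, countA m]
    rw [Finset.sum_congr rfl (fun i _ => hterm i), Finset.sum_const, card_univ]
    simp [mul_comm]
  have hT : #((univ : Finset (LucasVertex (m+1) × LucasVertex (m+1))).filter
      (fun p => hammingDist p.1.1 p.2.1 = 1))
      = #(((univ : Finset (LucasVertex (m+1) × Fin (m+1))).filter
          (fun q => q.1.1 q.2 = true)) ×ˢ (univ : Finset Bool)) := by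
    symm
    apply Finset.card_nbij'
      (i := fun x => cond x.2 (x.1.1, flipV x.1.1 x.1.2) (flipV x.1.1 x.1.2, x.1.1))
      (j := fun p => cond (p.1.1 (diffIdx p.1.1 p.2.1))
          ((p.1, diffIdx p.1.1 p.2.1), true) ((p.2, diffIdx p.1.1 p.2.1), false))
    · intro x hx
      simp only [mem_coe, mem_product, mem_filter, mem_univ, true_and, and_true] at hx
      cases hd : x.2 with
      | true =>
        simp only [hd, cond_true, mem_coe, mem_filter, mem_univ, true_and]
        exact ham_update _ _ hx
      | false =>
        simp only [hd, cond_false, mem_coe, mem_filter, mem_univ, true_and]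
        exact ham_update' _ _ hx
    · intro p hp
      simp only [mem_coe, mem_filter, mem_univ, true_and] at hp
      have hset := diff_spec hp
      have hne : p.1.1 (diffIdx p.1.1 p.2.1) ≠ p.2.1 (diffIdx p.1.1 p.2.1) := by
        have h1 : diffIdx p.1.1 p.2.1 ∈
            (univ : Finset (Fin (m+1))).filter (fun j => p.1.1 j ≠ p.2.1 j) := by
          rw [hset]; exact mem_singleton_self _
        exact (mem_filter.1 h1).2
      cases hx : p.1.1 (diffIdx p.1.1 p.2.1) with
      | true =>
        simp only [hx, cond_true, mem_coe, mem_product, mem_filter, mem_univ, true_and, and_true]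
      | false =>
        simp only [hx, cond_false, mem_coe, mem_product, mem_filter, mem_univ, true_and, and_true]
        exact bool_ne_false hne hx
    · intro x hx
      simp only [mem_coe, mem_product, mem_filter, mem_univ, true_and, and_true] at hx
      obtain ⟨⟨b, i⟩, d⟩ := x
      simp only at hx
      cases d with
      | true =>
        simp only [cond_true]
        have hidx : diffIdx b.1 (flipV b i).1 = i := diffIdx_eq (filt_update b.1 i hx)
        rw [hidx, hx]
        rfl
      | false =>
        simp only [cond_false]
        have hidx : diffIdx (flipV b i).1 b.1 = i := diffIdx_eq (filt_update' b.1 i hx)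
        rw [hidx]
        have hfi : (flipV b i).1 i = false := by
          show Function.update b.1 i false i = false
          simp
        rw [hfi, cond_false]
    · intro p hp
      simp only [mem_coe, mem_filter, mem_univ, true_and] at hp
      have hset := diff_spec hp
      beta_reduce
      set i0 := diffIdx p.1.1 p.2.1 with hi0
      have hne : p.1.1 i0 ≠ p.2.1 i0 := by
        have h1 : i0 ∈ (univ : Finset (Fin (m+1))).filter (fun j => p.1.1 j ≠ p.2.1 j) := by
          rw [hset]; exact mem_singleton_self _
        exact (mem_filter.1 h1).2
      have hag : ∀ j, j ≠ i0 → p.1.1 j = p.2.1 j := by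
        intro j hj
        by_contra hcon
        have h1 : j ∈ (univ : Finset (Fin (m+1))).filter (fun j => p.1.1 j ≠ p.2.1 j) :=
          mem_filter.2 ⟨mem_univ _, hcon⟩
        rw [hset, mem_singleton] at h1
        exact hj h1
      cases hx : p.1.1 i0 with
      | true =>
        simp only [hx, cond_true]
        have hflip : flipV p.1 i0 = p.2 := by
          apply Subtype.ext
          funext j
          show Function.update p.1.1 i0 false j = p.2.1 j
          rw [Function.update_apply]
          by_cases hj : j = i0
          · rw [if_pos hj, hj]
            exact (bool_ne_true hne hx).symm
          · rw [if_neg hj]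
            exact hag j hj
        rw [hflip]
      | false =>
        simp only [hx, cond_false]
        have hflip : flipV p.2 i0 = p.1 := by
          apply Subtype.ext
          funext j
          show Function.update p.2.1 i0 false j = p.1.1 j
          rw [Function.update_apply]
          by_cases hj : j = i0
          · rw [if_pos hj, hj]
            exact hx.symm
          · rw [if_neg hj]
            exact (hag j hj).symm
        rw [hflip]
  rw [hT, Finset.card_product, hS, card_univ, Nat.add_sub_cancel]
  simp
  ring
end

section
/- The generating function identity: the sum over n ≥ 2 of f_n * f_{n-1} * t^n equals t^2 / ((1+t)(1 − 3t + t^2)), as an identity of formal power series over the rationals. -/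
open PowerSeries

lemma fib_rec (n : ℕ) : (Nat.fib (n+3) * Nat.fib (n+2) : ℚ) =
    2 * (Nat.fib (n+2) * Nat.fib (n+1)) + 2 * (Nat.fib (n+1) * Nat.fib n)
      - Nat.fib n * Nat.fib (n-1) := by
  cases n with
  | zero => norm_num
  | succ m =>
    simp only [Nat.add_sub_cancel]
    have h2 : ∀ k, (Nat.fib (k+2) : ℚ) = Nat.fib (k+1) + Nat.fib k := by
      intro k; rw [Nat.fib_add_two]; push_cast; ring
    rw [show m+1+3 = m+4 from rfl, show m+1+2 = m+3 from rfl, show m+1+1 = m+2 from rfl,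
      show m+4 = m+2+2 from rfl, h2, show m+3 = m+1+2 from rfl, h2, h2]
    ring

theorem fib_product_gen_fun :
    PowerSeries.mk (fun n => if 2 ≤ n then (Nat.fib n * Nat.fib (n - 1) : ℚ) else 0) =
      (X : PowerSeries ℚ) ^ 2 * (((1 + X) * (1 - 3 * X + X ^ 2) : PowerSeries ℚ))⁻¹ := by
  have hmk : PowerSeries.mk (fun n => if 2 ≤ n then (Nat.fib n * Nat.fib (n - 1) : ℚ) else 0)
      = PowerSeries.mk (fun n => (Nat.fib n * Nat.fib (n - 1) : ℚ)) := by
    ext n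
    simp only [coeff_mk]
    split
    · rfl
    · interval_cases n <;> simp
  rw [hmk, eq_mul_inv_iff_mul_eq (by simp)]
  have hD : ((1 + X) * (1 - 3 * X + X ^ 2) : PowerSeries ℚ)
      = 1 - 2 * X - 2 * X^2 + X^3 := by ring
  rw [hD]
  ext n
  have e1 : (PowerSeries.mk (fun n => (Nat.fib n * Nat.fib (n - 1) : ℚ))) *
      (1 - 2 * X - 2 * X^2 + X^3)
      = PowerSeries.mk (fun n => (Nat.fib n * Nat.fib (n - 1) : ℚ))
        - (2:ℚ) • (X^1 * PowerSeries.mk (fun n => (Nat.fib n * Nat.fib (n - 1) : ℚ)))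
        - (2:ℚ) • (X^2 * PowerSeries.mk (fun n => (Nat.fib n * Nat.fib (n - 1) : ℚ)))
        + X^3 * PowerSeries.mk (fun n => (Nat.fib n * Nat.fib (n - 1) : ℚ)) := by
    simp only [PowerSeries.smul_eq_C_mul, map_ofNat]; ring
  rw [e1]
  simp only [map_add, map_sub, map_smul, coeff_mk, smul_eq_mul, coeff_X_pow_mul', coeff_mk, coeff_X_pow]
  match n with
  | 0 => norm_num
  | 1 => norm_num
  | 2 => norm_num
  | (m+3) =>
    norm_num
    have := fib_rec m
    push_cast at this ⊢
    linarith [this]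
end

section
/- The generating function identity 1/(1 − 3t + t^2)^2 = Σ_{n ≥ 0} (1/5) * ((4n+2) * f_{2n+2} + (3n+3) * f_{2n+1}) * t^n holds as formal power series over the rationals. -/
open PowerSeries
theorem gen_fun_fib_even_sq :
    (((1 - 3 * X + X ^ 2 : PowerSeries ℚ)) ^ 2)⁻¹ =
      PowerSeries.mk (fun n =>
        (1 / 5 : ℚ) * ((4 * (n : ℚ) + 2) * Nat.fib (2 * n + 2) +
          (3 * (n : ℚ) + 3) * Nat.fib (2 * n + 1))) := by
  have hc : constantCoeff ((1 - 3 * X + X ^ 2 : PowerSeries ℚ) ^ 2) ≠ 0 := by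
    simp
  rw [PowerSeries.inv_eq_iff_mul_eq_one hc]
  have hsq : (1 - 3 * X + X ^ 2 : PowerSeries ℚ) ^ 2
      = 1 - C (R := ℚ) 6 * X + C (R := ℚ) 11 * X ^ 2 - C (R := ℚ) 6 * X ^ 3 + X ^ 4 := by
    rw [show (C (R := ℚ) 6 : PowerSeries ℚ) = 6 from by simp [map_ofNat],
        show (C (R := ℚ) 11 : PowerSeries ℚ) = 11 from by simp [map_ofNat]]
    ring
  rw [hsq]
  set f : ℕ → ℚ := fun n =>
    (1 / 5 : ℚ) * ((4 * (n : ℚ) + 2) * Nat.fib (2 * n + 2) +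
      (3 * (n : ℚ) + 3) * Nat.fib (2 * n + 1)) with hf
  have e : mk f * (1 - C (R := ℚ) 6 * X + C (R := ℚ) 11 * X ^ 2 - C (R := ℚ) 6 * X ^ 3 + X ^ 4)
      = mk f - C (R := ℚ) 6 * (mk f * X ^ 1) + C (R := ℚ) 11 * (mk f * X ^ 2)
        - C (R := ℚ) 6 * (mk f * X ^ 3) + mk f * X ^ 4 := by ring
  ext n
  rw [e]
  simp only [map_add, map_sub, coeff_C_mul, coeff_mul_X_pow', coeff_one, coeff_mk]
  match n with
  | 0 => norm_num [hf]
  | 1 => norm_num [hf, Nat.fib]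
  | 2 => norm_num [hf, Nat.fib]
  | 3 => norm_num [hf, Nat.fib]
  | (m+4) =>
    have h1 : 1 ≤ m + 4 := by omega
    have h2 : 2 ≤ m + 4 := by omega
    have h3 : 3 ≤ m + 4 := by omega
    have h4 : 4 ≤ m + 4 := by omega
    simp only [if_pos h1, if_pos h2, if_pos h3, if_pos h4, if_neg (by omega : ¬ m + 4 = 0)]
    have s1 : m + 4 - 1 = m + 3 := by omega
    have s2 : m + 4 - 2 = m + 2 := by omega
    have s3 : m + 4 - 3 = m + 1 := by omega
    have s4 : m + 4 - 4 = m := by omega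
    rw [s1, s2, s3, s4, hf]
    simp only
    have F : ∀ k, (Nat.fib (2 * m + 1 + (k + 2)) : ℚ)
        = Nat.fib (2 * m + 1 + k) + Nat.fib (2 * m + 1 + (k + 1)) := by
      intro k
      rw [show 2 * m + 1 + (k + 2) = (2 * m + 1 + k) + 2 from by ring, Nat.fib_add_two]
      push_cast; ring
    have i3 := F 0
    have i4 := F 1
    have i5 := F 2
    have i6 := F 3
    have i7 := F 4
    have i8 := F 5
    have i9 := F 6
    have i10 := F 7
    norm_num at i3 i4 i5 i6 i7 i8 i9 i10 ⊢
    rw [show 2 * (m + 4) + 2 = 2 * m + 9 + 1 from by ring,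
        show 2 * (m + 4) + 1 = 2 * m + 8 + 1 from by ring,
        show 2 * (m + 3) + 2 = 2 * m + 7 + 1 from by ring,
        show 2 * (m + 3) + 1 = 2 * m + 6 + 1 from by ring,
        show 2 * (m + 2) + 2 = 2 * m + 5 + 1 from by ring,
        show 2 * (m + 2) + 1 = 2 * m + 4 + 1 from by ring,
        show 2 * (m + 1) + 2 = 2 * m + 3 + 1 from by ring,
        show 2 * (m + 1) + 1 = 2 * m + 2 + 1 from by ring]
    rw [i10, i9, i8, i7, i6, i5, i4, i3]
    ring
end

section
/- For n ≥ 1, the Wiener-index sum Σ_{k=1}^{n} f_k * f_{k+1} * f_{n-k+1} * f_{n-k+2} equals (1/25) * (4(n+1) * f_n^2 + (9n+2) * f_n * f_{n+1} + 6n * f_{n+1}^2). -/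
open Finset

noncomputable def Swien (n : ℕ) : ℚ :=
  ∑ k ∈ Icc 1 n, (Nat.fib k * Nat.fib (k + 1) * Nat.fib (n - k + 1) * Nat.fib (n - k + 2) : ℚ)

noncomputable def Cwien (n : ℕ) : ℚ :=
  (1 / 25) * (4 * ((n : ℚ) + 1) * (Nat.fib n : ℚ) ^ 2 +
    (9 * (n : ℚ) + 2) * Nat.fib n * Nat.fib (n + 1) +
    6 * (n : ℚ) * (Nat.fib (n + 1) : ℚ) ^ 2)

lemma fibq (m : ℕ) : ((Nat.fib (m + 2) : ℚ)) = Nat.fib m + Nat.fib (m + 1) := by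
  rw [Nat.fib_add_two]; push_cast; ring

lemma icc_split (n m : ℕ) (h : n ≤ m) (f : ℕ → ℚ) :
    ∑ k ∈ Icc 1 m, f k = (∑ k ∈ Icc 1 n, f k) + ∑ k ∈ Icc (n+1) m, f k := by
  have h1 : (Icc 1 m : Finset ℕ) = Ioc 0 m := by ext x; simp; omega
  have h2 : (Icc 1 n : Finset ℕ) = Ioc 0 n := by ext x; simp; omega
  have h3 : (Icc (n+1) m : Finset ℕ) = Ioc n m := by ext x; simp
  rw [h1, h2, h3, Finset.sum_Ioc_consecutive _ (Nat.zero_le n) h]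

lemma Srec (n : ℕ) : Swien (n+3) = 2 * Swien (n+2) + 2 * Swien (n+1) - Swien n
    + Nat.fib (n+3) * Nat.fib (n+4) := by
  have h3 := icc_split n (n+3) (by omega)
    (fun k => (Nat.fib k * Nat.fib (k + 1) * Nat.fib (n+3 - k + 1) * Nat.fib (n+3 - k + 2) : ℚ))
  have h2 := icc_split n (n+2) (by omega)
    (fun k => (Nat.fib k * Nat.fib (k + 1) * Nat.fib (n+2 - k + 1) * Nat.fib (n+2 - k + 2) : ℚ))
  have h1 := icc_split n (n+1) (by omega)
    (fun k => (Nat.fib k * Nat.fib (k + 1) * Nat.fib (n+1 - k + 1) * Nat.fib (n+1 - k + 2) : ℚ))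
  simp only [Swien]
  rw [h3, h2, h1]
  have main : (∑ k ∈ Icc 1 n, (Nat.fib k * Nat.fib (k + 1) * Nat.fib (n + 3 - k + 1) * Nat.fib (n + 3 - k + 2) : ℚ))
      = ∑ k ∈ Icc 1 n, ((2 * (Nat.fib k * Nat.fib (k + 1) * Nat.fib (n + 2 - k + 1) * Nat.fib (n + 2 - k + 2))
        + 2 * (Nat.fib k * Nat.fib (k + 1) * Nat.fib (n + 1 - k + 1) * Nat.fib (n + 1 - k + 2))
        - Nat.fib k * Nat.fib (k + 1) * Nat.fib (n - k + 1) * Nat.fib (n - k + 2) : ℚ)) := by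
    apply Finset.sum_congr rfl
    intro k hk
    simp only [Finset.mem_Icc] at hk
    obtain ⟨hk1, hk2⟩ := hk
    have e1 : n + 3 - k + 1 = (n - k) + 4 := by omega
    have e2 : n + 3 - k + 2 = (n - k) + 5 := by omega
    have e3 : n + 2 - k + 1 = (n - k) + 3 := by omega
    have e4 : n + 2 - k + 2 = (n - k) + 4 := by omega
    have e5 : n + 1 - k + 1 = (n - k) + 2 := by omega
    have e6 : n + 1 - k + 2 = (n - k) + 3 := by omega
    rw [e1, e2, e3, e4, e5, e6]
    set j := n - k
    have f2 : ((Nat.fib (j + 2) : ℚ)) = Nat.fib j + Nat.fib (j + 1) := fibq j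
    have f3 : ((Nat.fib (j + 3) : ℚ)) = Nat.fib (j + 1) + Nat.fib (j + 2) := fibq (j + 1)
    have f4 : ((Nat.fib (j + 4) : ℚ)) = Nat.fib (j + 2) + Nat.fib (j + 3) := fibq (j + 2)
    have f5 : ((Nat.fib (j + 5) : ℚ)) = Nat.fib (j + 3) + Nat.fib (j + 4) := fibq (j + 3)
    rw [f5, f4, f3, f2]
    ring
  rw [main, Finset.sum_sub_distrib, Finset.sum_add_distrib, ← Finset.mul_sum, ← Finset.mul_sum]
  -- boundary sums
  have b1 : (Icc (n+1) (n+1) : Finset ℕ) = {n+1} := Finset.Icc_self _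
  have b2 : (Icc (n+1) (n+2) : Finset ℕ) = {n+1, n+2} := by ext x; simp; omega
  have b3 : (Icc (n+1) (n+3) : Finset ℕ) = {n+1, n+2, n+3} := by ext x; simp; omega
  rw [b1, b2, b3]
  rw [Finset.sum_insert (by simp), Finset.sum_insert (by simp), Finset.sum_singleton,
    Finset.sum_insert (by simp), Finset.sum_singleton, Finset.sum_singleton]
  have s1 : n + 1 - (n+1) = 0 := by omega
  have s2 : n + 2 - (n+1) = 1 := by omega
  have s3 : n + 2 - (n+2) = 0 := by omega
  have s4 : n + 3 - (n+1) = 2 := by omega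
  have s5 : n + 3 - (n+2) = 1 := by omega
  have s6 : n + 3 - (n+3) = 0 := by omega
  rw [s1, s2, s3, s4, s5, s6]
  have t1 : n + 1 + 1 = n + 2 := by omega
  have t2 : n + 2 + 1 = n + 3 := by omega
  have t3 : n + 3 + 1 = n + 4 := by omega
  rw [t1, t2, t3]
  simp only [Nat.zero_add, Nat.reduceAdd]
  simp only [show Nat.fib 1 = 1 by decide, show Nat.fib 2 = 1 by decide,
    show Nat.fib 3 = 2 by decide, show Nat.fib 4 = 3 by decide]
  push_cast
  ring

lemma key (n : ℕ) : Swien n = Cwien n ∧ Swien (n+1) = Cwien (n+1) ∧ Swien (n+2) = Cwien (n+2) := by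
  induction n with
  | zero =>
    refine ⟨?_, ?_, ?_⟩
    · simp [Swien, Cwien]
    · norm_num [Swien, Cwien, Finset.Icc_self, show Nat.fib 1 = 1 by decide,
        show Nat.fib 2 = 1 by decide]
    · have h2 : (Icc 1 2 : Finset ℕ) = {1, 2} := by decide
      norm_num [Swien, Cwien, h2, show Nat.fib 1 = 1 by decide, show Nat.fib 2 = 1 by decide,
        show Nat.fib 3 = 2 by decide]
  | succ m ih =>
    refine ⟨ih.2.1, ih.2.2, ?_⟩
    have h := Srec m
    rw [ih.1, ih.2.1, ih.2.2] at h
    have e : m + 1 + 2 = m + 3 := by omega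
    rw [e, h]
    unfold Cwien
    have f2 : ((Nat.fib (m + 2) : ℚ)) = Nat.fib m + Nat.fib (m + 1) := fibq m
    have f3 : ((Nat.fib (m + 3) : ℚ)) = Nat.fib (m + 1) + Nat.fib (m + 2) := fibq (m + 1)
    have f4 : ((Nat.fib (m + 4) : ℚ)) = Nat.fib (m + 2) + Nat.fib (m + 3) := fibq (m + 2)
    rw [f4, f3, f2]
    push_cast
    ring

theorem wiener_sum_closed_form (n : ℕ) (hn : 1 ≤ n) :
    ∑ k ∈ Icc 1 n, (Nat.fib k * Nat.fib (k + 1) * Nat.fib (n - k + 1) * Nat.fib (n - k + 2) : ℚ) =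
      (1 / 25) * (4 * ((n : ℚ) + 1) * (Nat.fib n : ℚ) ^ 2 +
        (9 * (n : ℚ) + 2) * Nat.fib n * Nat.fib (n + 1) +
        6 * (n : ℚ) * (Nat.fib (n + 1) : ℚ) ^ 2) := by
  exact (key n).1
end
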